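/- arXiv:2501.04884 — 6 statements merged into one kernel-verified Lean document; each statement's English description precedes it below -/
import Mathlib

section
/- Every maximal anti-clique in $\mathbb{R}^n$ (with the Euclidean metric and farness relation $d(x,y) > 1$) is a convex set. -/
/-!
A maximal anti-clique `M` coincides with the set of points within distance `1` of every point
of `M`: that set contains `M` because `M` is an anti-clique, and any of its points can be
added to `M`, hence lies in `M` by maximality. Being an intersection of closed balls, it is
convex.
-/

/-- An anti-clique in Euclidean space for the farness relation. -/
def AntiCliqueE {n : ℕ} (M : Set (EuclideanSpace ℝ (Fin n))) : Prop :=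
  ∀ x ∈ M, ∀ y ∈ M, dist x y ≤ 1

open Metric

theorem AntiCliqueE.insert {n : ℕ} {M : Set (EuclideanSpace ℝ (Fin n))} (hM : AntiCliqueE M)
    {z : EuclideanSpace ℝ (Fin n)} (hz : ∀ m ∈ M, dist z m ≤ 1) :
    AntiCliqueE (insert z M) := by
  rintro p (rfl | hp) q (rfl | hq)
  · simp
  · exact hz q hq
  · simpa only [dist_comm] using hz p hp
  · exact hM p hp q hq

theorem AntiCliqueE.subset_iInter_closedBall {n : ℕ} {M : Set (EuclideanSpace ℝ (Fin n))}
    (hM : AntiCliqueE M) : M ⊆ ⋂ m ∈ M, closedBall m 1 := by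
  intro x hx
  simp only [Set.mem_iInter, mem_closedBall]
  exact fun m hm => hM x hx m hm

theorem AntiCliqueE.iInter_closedBall_subset_of_maximal {n : ℕ} {M : Set (EuclideanSpace ℝ (Fin n))}
    (hM : AntiCliqueE M)
    (hmax : ∀ M' : Set (EuclideanSpace ℝ (Fin n)), AntiCliqueE M' → M ⊆ M' → M' = M) :
    ⋂ m ∈ M, closedBall m 1 ⊆ M := by
  intro z hz
  simp only [Set.mem_iInter, mem_closedBall] at hz
  rw [← hmax _ (hM.insert hz) (Set.subset_insert z M)]
  exact Set.mem_insert z M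

theorem stmt_2 {n : ℕ} (M : Set (EuclideanSpace ℝ (Fin n)))
    (hM : AntiCliqueE M)
    (hmax : ∀ M' : Set (EuclideanSpace ℝ (Fin n)), AntiCliqueE M' → M ⊆ M' → M' = M) :
    Convex ℝ M := by
  have hM_eq : M = ⋂ m ∈ M, closedBall m 1 :=
    hM.subset_iInter_closedBall.antisymm (hM.iInter_closedBall_subset_of_maximal hmax)
  rw [hM_eq]
  exact convex_iInter₂ fun m _ => convex_closedBall m 1
end

section
/- For each $n \ge 1$ and each $k \ge n$, there exist $n+1$ closed balls of equal radius in $\mathbb{R}^k$ such that every $n$ of them have a common point, but the intersection of all $n+1$ balls is empty. -/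
/-!
For vectors `v₁, …, v_N` in a real inner product space,
`∑ᵢ ∑ⱼ ‖vᵢ - vⱼ‖² = 2N ∑ᵢ ‖vᵢ‖² - 2 ‖∑ᵢ vᵢ‖²`. Applied to `vᵢ = cᵢ - p`, where the `cᵢ` are
the `N` vertices of a regular simplex of side `d`, it gives `2N ∑ᵢ dist(p, cᵢ)² ≥ N(N-1)d²`, so
no point lies within the circumradius `√((N-1)/(2N)) d` of all vertices; applied with `p = c_m`
it shows that the centroid is at exactly that distance from every vertex. The `n` balls around
the vertices of a facet therefore meet as soon as the radius reaches the circumradius of the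
facet, while all `n + 1` balls stay disjoint below that of the whole simplex, which is larger.
A regular simplex with `n + 1` vertices fits in dimension `n`: take `n` orthonormal vectors and a
suitable multiple of their sum.
-/

open Finset Metric
open scoped RealInnerProductSpace

variable {E : Type*} [NormedAddCommGroup E] [InnerProductSpace ℝ E] {ι : Type*}

theorem sum_sum_norm_sub_sq (s : Finset ι) (v : ι → E) :
    ∑ i ∈ s, ∑ j ∈ s, ‖v i - v j‖ ^ 2 =
      2 * #s * ∑ i ∈ s, ‖v i‖ ^ 2 - 2 * ‖∑ i ∈ s, v i‖ ^ 2 := by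
  have hsum : ‖∑ i ∈ s, v i‖ ^ 2 = ∑ i ∈ s, ∑ j ∈ s, ⟪v i, v j⟫ := by
    simp_rw [← real_inner_self_eq_norm_sq, sum_inner, inner_sum]
  simp_rw [hsum, norm_sub_sq_real, sum_add_distrib, sum_sub_distrib, sum_const, nsmul_eq_mul,
    ← mul_sum, mul_sum s _ (2 : ℝ)]
  ring

section Equilateral

variable {c : ι → E} {s : Finset ι} {d r : ℝ}

omit [InnerProductSpace ℝ E] in
theorem sum_dist_sq_from_mem_of_pairwise_dist_eq
    (hc : (s : Set ι).Pairwise fun i j ↦ dist (c i) (c j) = d) {m : ι} (hm : m ∈ s) :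
    ∑ j ∈ s, dist (c m) (c j) ^ 2 = (#s - 1) * d ^ 2 := by
  classical
  rw [← add_sum_erase s _ hm, dist_self, sum_congr rfl fun j hj ↦ by
    rw [hc hm (mem_erase.1 hj).2 (mem_erase.1 hj).1.symm], sum_const, nsmul_eq_mul,
    cast_card_erase_of_mem hm]
  ring

theorem sum_dist_sq_of_pairwise_dist_eq
    (hc : (s : Set ι).Pairwise fun i j ↦ dist (c i) (c j) = d) (p : E) :
    2 * #s * ∑ i ∈ s, dist p (c i) ^ 2 =
      #s * (#s - 1) * d ^ 2 + 2 * ‖∑ i ∈ s, (c i - p)‖ ^ 2 := by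
  have h := sum_sum_norm_sub_sq s (fun i ↦ c i - p)
  simp only [sub_sub_sub_cancel_right, ← dist_eq_norm, dist_comm _ p] at h
  rw [sum_congr rfl fun i hi ↦ sum_dist_sq_from_mem_of_pairwise_dist_eq hc hi, sum_const,
    nsmul_eq_mul] at h
  linarith

theorem not_exists_forall_mem_closedBall_of_pairwise_dist_eq
    (hc : (s : Set ι).Pairwise fun i j ↦ dist (c i) (c j) = d)
    (hr : 2 * #s * r ^ 2 < (#s - 1) * d ^ 2) : ¬ ∃ p, ∀ i ∈ s, p ∈ closedBall (c i) r := by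
  rintro ⟨p, hp⟩
  have hs : (0 : ℝ) < #s := by
    by_contra! hs
    nlinarith [sq_nonneg r, sq_nonneg d, (#s).cast_nonneg (α := ℝ)]
  have hsum : ∑ i ∈ s, dist p (c i) ^ 2 ≤ #s * r ^ 2 := by
    simpa using sum_le_card_nsmul s _ (r ^ 2) fun i hi ↦ pow_le_pow_left₀ dist_nonneg (hp i hi) 2
  have := sum_dist_sq_of_pairwise_dist_eq hc p
  nlinarith [sq_nonneg ‖∑ i ∈ s, (c i - p)‖]

theorem exists_forall_mem_closedBall_of_pairwise_dist_eq
    (hc : (s : Set ι).Pairwise fun i j ↦ dist (c i) (c j) = d) (hr₀ : 0 ≤ r)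
    (hr : (#s - 1) * d ^ 2 ≤ 2 * #s * r ^ 2) : ∃ p, ∀ i ∈ s, p ∈ closedBall (c i) r := by
  refine ⟨(#s : ℝ)⁻¹ • ∑ i ∈ s, c i, fun m hm ↦ ?_⟩
  have hs : (0 : ℝ) < #s := by exact_mod_cast card_pos.2 ⟨m, hm⟩
  have key := sum_dist_sq_of_pairwise_dist_eq hc (c m)
  rw [sum_dist_sq_from_mem_of_pairwise_dist_eq hc hm, sum_sub_distrib, sum_const,
    ← Nat.cast_smul_eq_nsmul ℝ] at key
  have hdist : dist ((#s : ℝ)⁻¹ • ∑ i ∈ s, c i) (c m) =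
      (#s : ℝ)⁻¹ * ‖∑ i ∈ s, c i - (#s : ℝ) • c m‖ := by
    rw [dist_eq_norm, ← norm_smul_of_nonneg (inv_nonneg.2 hs.le), smul_sub,
      inv_smul_smul₀ hs.ne']
  rw [mem_closedBall, hdist]
  refine (pow_le_pow_iff_left₀ (by positivity) hr₀ two_ne_zero).1 ?_
  rw [mul_pow, inv_pow, inv_mul_le_iff₀ (by positivity)]
  nlinarith [mul_le_mul_of_nonneg_left hr hs.le]

end Equilateral

theorem Orthonormal.exists_pairwise_dist_eq_sqrt_two {n : ℕ} {v : Fin n → E}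
    (hv : Orthonormal ℝ v) : ∃ c : Fin (n + 1) → E, Pairwise fun i j ↦ dist (c i) (c j) = √2 := by
  rcases n.eq_zero_or_pos with rfl | hn
  · exact ⟨0, fun i j hij ↦ (hij (Fin.ext (by omega))).elim⟩
  -- `t • ∑ vᵢ` is at squared distance `n t² - 2t + 1` from every `vⱼ`
  obtain ⟨t, ht⟩ : ∃ t : ℝ, n * t ^ 2 = 2 * t + 1 := by
    refine ⟨(1 + √(n + 1)) / n, ?_⟩
    have hsq : √((n : ℝ) + 1) ^ 2 = n + 1 := Real.sq_sqrt (by positivity)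
    field_simp
    linear_combination hsq
  have hv_dist {i j : Fin n} (hij : i ≠ j) : dist (v i) (v j) ^ 2 = 2 := by
    rw [dist_eq_norm, norm_sub_sq_real, hv.inner_eq_zero hij, hv.1 i, hv.1 j]
    norm_num
  have hapex_dist (j : Fin n) : dist (∑ i, t • v i) (v j) ^ 2 = 2 := by
    rw [dist_eq_norm, norm_sub_sq_real, ← real_inner_self_eq_norm_sq, hv.inner_sum,
      hv.inner_left_fintype, hv.1 j]
    simp only [sum_const, card_univ, Fintype.card_fin, nsmul_eq_mul, conj_trivial]
    linear_combination ht
  refine ⟨Fin.snoc v (∑ i, t • v i), fun i j hij ↦ ?_⟩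
  show dist _ _ = √2
  rw [← Real.sqrt_sq dist_nonneg]
  congr 1
  induction i using Fin.lastCases <;> induction j using Fin.lastCases
  · exact (hij rfl).elim
  · simpa only [Fin.snoc_last, Fin.snoc_castSucc] using hapex_dist _
  · simpa only [Fin.snoc_last, Fin.snoc_castSucc, dist_comm] using hapex_dist _
  · simpa only [Fin.snoc_castSucc] using hv_dist (fun h ↦ hij (congrArg _ h))

theorem stmt_5 (n k : ℕ) (hn : 1 ≤ n) (hk : n ≤ k) :
    ∃ (c : Fin (n + 1) → EuclideanSpace ℝ (Fin k)) (r : ℝ), 0 < r ∧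
      (∀ i : Fin (n + 1), ∃ p, ∀ j : Fin (n + 1), j ≠ i → p ∈ Metric.closedBall (c j) r) ∧
      ¬ ∃ p, ∀ j : Fin (n + 1), p ∈ Metric.closedBall (c j) r := by
  obtain ⟨c, hc⟩ := ((EuclideanSpace.basisFun (Fin k) ℝ).orthonormal.comp _
    (Fin.castLE_injective hk)).exists_pairwise_dist_eq_sqrt_two
  have hn' : (1 : ℝ) ≤ n := by exact_mod_cast hn
  -- `(2n - 1)/(2n + 1)` is the mediant of `(n - 1)/n` and `n/(n + 1)`, the squared circumradii
  -- of a facet and of the whole simplex of side `√2`.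
  have hr : √((2 * n - 1) / (2 * n + 1)) ^ 2 = (2 * n - 1) / (2 * n + 1) :=
    Real.sq_sqrt (div_nonneg (by linarith) (by positivity))
  refine ⟨c, √((2 * n - 1) / (2 * n + 1)), Real.sqrt_pos.2 (div_pos (by linarith) (by positivity)),
    fun i ↦ ?_, fun ⟨p, hp⟩ ↦ ?_⟩
  · obtain ⟨p, hp⟩ := exists_forall_mem_closedBall_of_pairwise_dist_eq (s := univ.erase i)
      (hc.set_pairwise _) (Real.sqrt_nonneg _) (by
        rw [cast_card_erase_of_mem (mem_univ i), hr, Real.sq_sqrt zero_le_two]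
        simp only [card_univ, Fintype.card_fin, Nat.cast_add, Nat.cast_one, add_sub_cancel_right]
        rw [mul_div_assoc', le_div_iff₀ (by positivity)]
        nlinarith)
    exact ⟨p, fun j hj ↦ hp j (mem_erase.2 ⟨hj, mem_univ j⟩)⟩
  · refine not_exists_forall_mem_closedBall_of_pairwise_dist_eq (s := univ) (hc.set_pairwise _) ?_
      ⟨p, fun j _ ↦ hp j⟩
    rw [hr, Real.sq_sqrt zero_le_two]
    simp only [card_univ, Fintype.card_fin, Nat.cast_add, Nat.cast_one, add_sub_cancel_right]
    rw [mul_div_assoc', div_lt_iff₀ (by positivity)]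
    nlinarith
end

section
/- Let $M_n$ denote the maximal cardinality of a weak anti-clique contained in an open ball of radius 1 in $\mathbb{R}^n$. Then $1 < M_n < M_{n+1}$ for each $n \ge 1$. -/
/-!
A unit vector `v` splits into `±v/2`, giving two points at distance `1` in a unit ball.

For the strict increase, take a maximal configuration `S` in a unit ball of `ℝⁿ`, put it at height
`0` in `ℝⁿ × ℝ`, and add the apex `(c, 1)` above the centre `c`. The apex is at distance at least
`1` from every point of `S`. Lifting the centre to height `s` brings the apex to distance `1 - s`,
and the points of `S`, which lie in a closed ball of some radius `r < 1` by finiteness, to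
distance at most `√(r² + s²)`; both are `< 1` once `s` is small.
-/

open Metric WithLp

variable {E F : Type*}

def weakAntiCliqueCards (E : Type*) [PseudoMetricSpace E] : Set ℕ :=
  {k | ∃ (c : E) (S : Finset E), S.card = k ∧ ↑S ⊆ ball c 1 ∧
    (S : Set E).Pairwise fun x y => 1 ≤ dist x y}

theorem Isometry.weakAntiCliqueCards_subset [MetricSpace E] [PseudoMetricSpace F] {f : E → F}
    (hf : Isometry f) : weakAntiCliqueCards E ⊆ weakAntiCliqueCards F := by
  classical
  rintro k ⟨c, S, rfl, hball, hsep⟩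
  refine ⟨f c, S.image f, S.card_image_of_injective hf.injective, ?_, ?_⟩
  · rw [Finset.coe_image]
    exact ((hf.mapsTo_ball c 1).mono_left hball).image_subset
  · rw [Finset.coe_image]
    refine Set.Pairwise.image fun x hx y hy hxy => ?_
    rw [Function.onFun, hf.dist_eq]
    exact hsep hx hy hxy

theorem Finset.exists_lt_forall_dist_le [PseudoMetricSpace E] {S : Finset E} {c : E} {ε : ℝ}
    (hε : 0 < ε) (hS : ↑S ⊆ ball c ε) : ∃ r < ε, 0 ≤ r ∧ ∀ x ∈ S, dist x c ≤ r := by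
  refine ⟨(S.sup (nndist · c) : NNReal), ?_, NNReal.coe_nonneg _,
    fun x hx => NNReal.coe_le_coe.2 (Finset.le_sup (f := (nndist · c)) hx)⟩
  lift ε to NNReal using hε.le
  exact_mod_cast (Finset.sup_lt_iff (by exact_mod_cast hε)).2 fun x hx => by
    exact_mod_cast mem_ball.1 (hS hx)

theorem two_mem_weakAntiCliqueCards [SeminormedAddCommGroup E] [NormedSpace ℝ E]
    [NontrivialTopology E] : 2 ∈ weakAntiCliqueCards E := by
  classical
  obtain ⟨v, hv⟩ := exists_norm_eq E (zero_le_one' ℝ)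
  have hdist : dist ((1 / 2 : ℝ) • v) (-(1 / 2 : ℝ) • v) = 1 := by
    rw [dist_eq_norm, ← sub_smul, norm_smul, hv]
    norm_num
  have hne : (1 / 2 : ℝ) • v ≠ -(1 / 2 : ℝ) • v := by
    rintro h
    rw [h, dist_self] at hdist
    exact zero_ne_one hdist
  refine ⟨0, {(1 / 2 : ℝ) • v, -(1 / 2 : ℝ) • v}, Finset.card_pair hne, ?_, ?_⟩
  · intro x hx
    rcases Finset.mem_insert.mp hx with rfl | hx
    · rw [mem_ball, dist_zero_right, norm_smul, hv]
      norm_num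
    · rw [Finset.mem_singleton.mp hx, mem_ball, dist_zero_right, norm_smul, hv]
      norm_num
  · rw [Finset.coe_pair, Set.pairwise_pair, dist_comm ((-(1 / 2) : ℝ) • v), hdist]
    exact fun _ => ⟨le_rfl, le_rfl⟩

section Prod

variable [SeminormedAddCommGroup E] [SeminormedAddCommGroup F]

theorem WithLp.dist_toLp_two_prod (a b : E) (u w : F) :
    dist (toLp 2 (a, u)) (toLp 2 (b, w)) = √(dist a b ^ 2 + dist u w ^ 2) :=
  prod_dist_eq_of_L2 _ _

theorem succ_mem_weakAntiCliqueCards_prod [NormedSpace ℝ F] [NontrivialTopology F] {k : ℕ}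
    (hk : k ∈ weakAntiCliqueCards E) : k + 1 ∈ weakAntiCliqueCards (WithLp 2 (E × F)) := by
  classical
  obtain ⟨c, S, rfl, hball, hsep⟩ := hk
  obtain ⟨r, hr1, hr0, hr⟩ := S.exists_lt_forall_dist_le one_pos hball
  obtain ⟨v, hv⟩ := exists_norm_eq F zero_le_one
  obtain ⟨s, hs0, hs1, hrs⟩ : ∃ s : ℝ, 0 < s ∧ s < 1 ∧ r ^ 2 + s ^ 2 < 1 :=
    ⟨(1 - r) / 2, by linarith, by linarith, by nlinarith⟩
  let ι : E → WithLp 2 (E × F) := fun x => toLp 2 (x, 0)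
  have hι_inj : Function.Injective ι := fun x y h => congrArg Prod.fst (toLp_injective 2 h)
  have hapex (x : E) : 1 ≤ dist (toLp 2 (c, v)) (ι x) := by
    rw [dist_toLp_two_prod, Real.le_sqrt zero_le_one (by positivity), dist_zero_right, hv]
    nlinarith [sq_nonneg (dist c x)]
  refine ⟨toLp 2 (c, s • v), insert (toLp 2 (c, v)) (S.image ι), ?_, ?_, ?_⟩
  · refine (Finset.card_insert_of_notMem fun h => ?_).trans
      (by rw [S.card_image_of_injective hι_inj])
    obtain ⟨x, -, hx⟩ := Finset.mem_image.1 h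
    have := hapex x
    rw [← hx, dist_self] at this
    exact zero_lt_one.not_ge this
  · intro z hz
    rw [Finset.coe_insert, Finset.coe_image] at hz
    obtain rfl | ⟨x, hx, rfl⟩ := hz
    · rw [mem_ball, dist_toLp_two_prod, dist_self, zero_pow two_ne_zero, zero_add,
        Real.sqrt_sq dist_nonneg, dist_eq_norm]
      calc ‖v - s • v‖ = ‖(1 - s) • v‖ := by rw [sub_smul, one_smul]
        _ = 1 - s := by rw [norm_smul, hv, mul_one, Real.norm_of_nonneg (by linarith)]
        _ < 1 := by linarith
    · rw [mem_ball, dist_toLp_two_prod, dist_zero_left, norm_smul, hv, mul_one,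
        Real.norm_of_nonneg hs0.le, Real.sqrt_lt' one_pos]
      linarith [pow_le_pow_left₀ dist_nonneg (hr x hx) 2]
  · rw [Finset.coe_insert, Finset.coe_image, Set.pairwise_insert]
    refine ⟨Set.Pairwise.image fun x hx y hy hxy => ?_, ?_⟩
    · rw [Function.onFun, dist_toLp_fst 2 E F x y]
      exact hsep hx hy hxy
    · rintro _ ⟨x, -, rfl⟩ -
      exact ⟨hapex x, dist_comm (ι x) _ ▸ hapex x⟩

end Prod

theorem EuclideanSpace.weakAntiCliqueCards_prod_subset (n m : ℕ) :
    weakAntiCliqueCards (WithLp 2 (EuclideanSpace ℝ (Fin n) × EuclideanSpace ℝ (Fin m))) ⊆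
      weakAntiCliqueCards (EuclideanSpace ℝ (Fin (n + m))) :=
  ((LinearIsometryEquiv.piLpCongrLeft 2 ℝ ℝ finSumFinEquiv.symm).trans
    (PiLp.sumPiLpEquivProdLpPiLp 2 _)).symm.isometry.weakAntiCliqueCards_subset

theorem stmt_9 (M : ℕ → ℕ)
    (hM : ∀ n : ℕ, IsGreatest
      {k : ℕ | ∃ (c : EuclideanSpace ℝ (Fin n)) (S : Finset (EuclideanSpace ℝ (Fin n))),
        S.card = k ∧ ↑S ⊆ Metric.ball c 1 ∧
        ∀ x ∈ S, ∀ y ∈ S, x ≠ y → 1 ≤ dist x y} (M n)) :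
    ∀ n : ℕ, 1 ≤ n → 1 < M n ∧ M n < M (n + 1) := by
  intro n hn
  have hM' (m : ℕ) : IsGreatest (weakAntiCliqueCards (EuclideanSpace ℝ (Fin m))) (M m) := hM m
  have : NeZero n := ⟨by omega⟩
  have htwo : 2 ≤ M n := (hM' n).2 two_mem_weakAntiCliqueCards
  have hsucc : M n + 1 ≤ M (n + 1) :=
    (hM' (n + 1)).2 <| EuclideanSpace.weakAntiCliqueCards_prod_subset n 1 <|
      succ_mem_weakAntiCliqueCards_prod (hM' n).1
  omega
end

section
/- There exists a surjective p-morphism from the frame $(\mathbb{R}, R_{>1})$, where $x\,R_{>1}\,y$ iff $|x-y| > 1$, onto the finite frame $G = (\{0, 1, \ldots, N\}, R')$ where $x\,R'\,y$ iff ($x \ne y$ or $x = y = 0$), for any $N \ge 1$. -/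
/-!
Collapse each block `[2i, 2i+1]`, `1 ≤ i ≤ N`, to the point `i` and everything else to `0`.
Two points of one block are at distance at most `1`, so `R_{>1}` never relates them: this gives
irreflexivity at `i ≠ 0`. Conversely, a point outside a block is more than `1` away from one of
its two endpoints, and the part collapsed to `0` is unbounded below, so every `R'`-successor
of an image point lifts.
-/

open Set

structure IsPMorphism {X Y : Type*} (R : X → X → Prop) (S : Y → Y → Prop) (f : X → Y) :
    Prop where
  map_rel : ∀ x x', R x x' → S (f x) (f x')
  exists_lift : ∀ x y, S (f x) y → ∃ x', R x x' ∧ f x' = y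

def collapseBlock (i : ℕ) : Set ℝ := Icc (2 * (i : ℝ)) (2 * i + 1)

lemma eq_of_mem_collapseBlock {x : ℝ} {i j : ℕ} (hi : x ∈ collapseBlock i)
    (hj : x ∈ collapseBlock j) : i = j := by
  have hij : (i : ℝ) < j + 1 := by linarith [hi.1, hj.2]
  have hji : (j : ℝ) < i + 1 := by linarith [hj.1, hi.2]
  have : i < j + 1 := by exact_mod_cast hij
  have : j < i + 1 := by exact_mod_cast hji
  omega

lemma abs_sub_le_one_of_mem_collapseBlock {x x' : ℝ} {i : ℕ} (hx : x ∈ collapseBlock i)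
    (hx' : x' ∈ collapseBlock i) : |x - x'| ≤ 1 := by
  simpa [collapseBlock, Real.dist_eq] using Real.dist_le_of_mem_Icc hx hx'

lemma exists_mem_collapseBlock_one_lt_abs_sub {x : ℝ} {i : ℕ} (hx : x ∉ collapseBlock i) :
    ∃ x' ∈ collapseBlock i, 1 < |x - x'| := by
  simp only [collapseBlock, mem_Icc, not_and_or, not_le] at hx
  rcases hx with hlt | hgt
  · refine ⟨2 * i + 1, ⟨by linarith, le_rfl⟩, ?_⟩
    rw [abs_of_neg (by linarith)]
    linarith
  · refine ⟨2 * i, ⟨le_rfl, by linarith⟩, ?_⟩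
    rw [abs_of_pos (by linarith)]
    linarith

noncomputable def intervalCollapse (N : ℕ) (x : ℝ) : Fin (N + 1) :=
  open Classical in
  if h : ∃ i : Fin (N + 1), i ≠ 0 ∧ x ∈ collapseBlock i then h.choose else 0

section

variable {N : ℕ} {x : ℝ}

lemma intervalCollapse_eq_of_mem_collapseBlock {i : Fin (N + 1)} (hi : i ≠ 0)
    (hx : x ∈ collapseBlock i) : intervalCollapse N x = i := by
  have h : ∃ i : Fin (N + 1), i ≠ 0 ∧ x ∈ collapseBlock i := ⟨i, hi, hx⟩
  rw [intervalCollapse, dif_pos h]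
  exact Fin.ext (eq_of_mem_collapseBlock h.choose_spec.2 hx)

lemma mem_collapseBlock_intervalCollapse (h : intervalCollapse N x ≠ 0) :
    x ∈ collapseBlock (intervalCollapse N x) := by
  unfold intervalCollapse at h ⊢
  split_ifs at h ⊢ with hex
  · exact hex.choose_spec.2
  · exact absurd rfl h

lemma intervalCollapse_of_lt_two (hx : x < 2) : intervalCollapse N x = 0 := by
  by_contra h
  have hmem := (mem_collapseBlock_intervalCollapse h).1
  have : (1 : ℝ) ≤ (intervalCollapse N x : ℕ) := by
    exact_mod_cast Nat.one_le_iff_ne_zero.mpr (Fin.val_ne_zero_iff.mpr h)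
  linarith

lemma intervalCollapse_surjective : Function.Surjective (intervalCollapse N) := by
  intro i
  by_cases hi : i = 0
  · exact ⟨0, hi ▸ intervalCollapse_of_lt_two (by norm_num)⟩
  · exact ⟨2 * i, intervalCollapse_eq_of_mem_collapseBlock hi ⟨le_rfl, by linarith⟩⟩

theorem isPMorphism_intervalCollapse :
    IsPMorphism (fun x x' : ℝ => 1 < |x - x'|)
      (fun i j : Fin (N + 1) => i ≠ j ∨ (i = 0 ∧ j = 0)) (intervalCollapse N) where
  map_rel x x' hfar := by
    by_cases hne : intervalCollapse N x = intervalCollapse N x'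
    · by_cases h0 : intervalCollapse N x = 0
      · exact .inr ⟨h0, hne ▸ h0⟩
      · have hx := mem_collapseBlock_intervalCollapse h0
        have hx' := mem_collapseBlock_intervalCollapse (hne ▸ h0)
        rw [← hne] at hx'
        exact absurd (abs_sub_le_one_of_mem_collapseBlock hx hx') (not_le.mpr hfar)
    · exact .inl hne
  exists_lift x i hrel := by
    by_cases hi : i = 0
    · have := min_le_left x 0
      have := min_le_right x 0
      refine ⟨min x 0 - 2, ?_, hi ▸ intervalCollapse_of_lt_two (by linarith)⟩
      rw [abs_of_pos (by linarith)]
      linarith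
    · have hne : intervalCollapse N x ≠ i := hrel.resolve_right (fun h ↦ hi h.2)
      have hx : x ∉ collapseBlock i :=
        fun hx ↦ hne (intervalCollapse_eq_of_mem_collapseBlock hi hx)
      obtain ⟨x', hx', hfar⟩ := exists_mem_collapseBlock_one_lt_abs_sub hx
      exact ⟨x', hfar, intervalCollapse_eq_of_mem_collapseBlock hi hx'⟩

end

theorem stmt_15_general (N : ℕ) :
    ∃ f : ℝ → Fin (N + 1),
      Function.Surjective f ∧
      (∀ x x' : ℝ, |x - x'| > 1 → (f x ≠ f x' ∨ (f x = 0 ∧ f x' = 0))) ∧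
      (∀ (x : ℝ) (y : Fin (N + 1)), (f x ≠ y ∨ (f x = 0 ∧ y = 0)) →
        ∃ x' : ℝ, |x - x'| > 1 ∧ f x' = y) :=
  ⟨intervalCollapse N, intervalCollapse_surjective,
    isPMorphism_intervalCollapse.map_rel,
    isPMorphism_intervalCollapse.exists_lift⟩

theorem stmt_15 (N : ℕ) (hN : 1 ≤ N) :
    ∃ f : ℝ → Fin (N + 1),
      Function.Surjective f ∧
      (∀ x x' : ℝ, |x - x'| > 1 → (f x ≠ f x' ∨ (f x = 0 ∧ f x' = 0))) ∧
      (∀ (x : ℝ) (y : Fin (N + 1)), (f x ≠ y ∨ (f x = 0 ∧ y = 0)) →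
        ∃ x' : ℝ, |x - x'| > 1 ∧ f x' = y) :=
  stmt_15_general N
end

section
/- Let $\mathcal{A}$ be a Boolean subalgebra of the powerset of $\mathbb{R}$ closed under the operation $S \mapsto \lozenge S = \{x : \exists y \in S,\ |x-y| > 1\}$. If $[a,b] \in \mathcal{A}$ and $(c,b] \in \mathcal{A}$ with $a < b - 1 < c < b$, then $(b, c+1] \in \mathcal{A}$. -/
theorem stmt_17 (A : Set (Set ℝ))
    (hcompl : ∀ S ∈ A, Sᶜ ∈ A)
    (hunion : ∀ S ∈ A, ∀ T ∈ A, S ∪ T ∈ A)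
    (hdia : ∀ S ∈ A, {x : ℝ | ∃ y ∈ S, |x - y| > 1} ∈ A)
    (a b c : ℝ) (hab : a < b - 1) (hbc : b - 1 < c) (hcb : c < b)
    (hIcc : Set.Icc a b ∈ A) (hIoc : Set.Ioc c b ∈ A) :
    Set.Ioc b (c + 1) ∈ A := by
  have key : Set.Ioc b (c + 1)
      = ({x : ℝ | ∃ y ∈ Set.Ioc c b, |x - y| > 1} ∪ Set.Icc a b)ᶜ := by
    ext x
    simp only [Set.mem_Ioc, Set.mem_compl_iff, Set.mem_union, Set.mem_setOf_eq,
      Set.mem_Icc, not_or, not_exists, not_and, not_lt]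
    constructor
    · rintro ⟨hx1, hx2⟩
      refine ⟨fun y hy => ?_, fun _ => ?_⟩
      · obtain ⟨hy1, hy2⟩ := hy
        rw [abs_le]
        constructor <;> linarith
      · linarith
    · rintro ⟨h1, h2⟩
      constructor
      · rcases lt_or_ge x (b - 1) with h3 | h3
        · have := h1 b ⟨hcb, le_refl b⟩
          rw [abs_le] at this
          linarith [this.1]
        · exact lt_of_not_ge (h2 (by linarith))
      · by_contra hxc
        push_neg at hxc
        set y := min b (c + (x - c - 1) / 2) with hy
        have hyc : c < y := lt_min hcb (by linarith)
        have hyb : y ≤ b := min_le_left _ _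
        have := h1 y ⟨hyc, hyb⟩
        rw [abs_le] at this
        have hle : y ≤ c + (x - c - 1) / 2 := min_le_right _ _
        linarith [this.2]
  rw [key]
  exact hcompl _ (hunion _ (hdia _ hIoc) _ hIcc)
end

section
/- Let $\mathcal{A}$ be a Boolean subalgebra of the powerset of $\mathbb{R}$ closed under $S \mapsto \lozenge S = \{x : \exists y \in S,\ |x-y| > 1\}$. If $[0,1] \in \mathcal{A}$ and $[d, d+1] \in \mathcal{A}$ for some $0 < d < 1$, then $\mathcal{A}$ is infinite; in particular, $[0, d+n]$ and $(n, d+n]$ belong to $\mathcal{A}$ for every natural number $n \ge 1$. -/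
theorem stmt_18 (A : Set (Set ℝ))
    (hcompl : ∀ S ∈ A, Sᶜ ∈ A)
    (hunion : ∀ S ∈ A, ∀ T ∈ A, S ∪ T ∈ A)
    (hdia : ∀ S ∈ A, {x : ℝ | ∃ y ∈ S, |x - y| > 1} ∈ A)
    (d : ℝ) (hd0 : 0 < d) (hd1 : d < 1)
    (h0 : Set.Icc (0 : ℝ) 1 ∈ A) (hd : Set.Icc d (d + 1) ∈ A) :
    A.Infinite ∧ ∀ n : ℕ, 1 ≤ n →
      Set.Icc (0 : ℝ) (d + n) ∈ A ∧ Set.Ioc (n : ℝ) (d + n) ∈ A := by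
  have hinter : ∀ S ∈ A, ∀ T ∈ A, S ∩ T ∈ A := by
    intro S hS T hT
    have := hcompl _ (hunion _ (hcompl _ hS) _ (hcompl _ hT))
    rwa [Set.compl_union, compl_compl, compl_compl] at this
  -- complement of the diamond of a half-open interval
  have d2 : ∀ c b : ℝ, c < b → b ≤ c + 2 → Set.Ioc c b ∈ A →
      Set.Icc (b - 1) (c + 1) ∈ A := by
    intro c b hcb hb2 hS
    have h := hcompl _ (hdia _ hS)
    have heq : ({x : ℝ | ∃ y ∈ Set.Ioc c b, |x - y| > 1})ᶜ
        = Set.Icc (b - 1) (c + 1) := by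
      ext x
      simp only [Set.mem_compl_iff, Set.mem_setOf_eq, Set.mem_Ioc, Set.mem_Icc, not_exists,
        not_and, not_lt]
      constructor
      · intro hx
        have h1 : |x - b| ≤ 1 := hx b ⟨hcb, le_rfl⟩
        rw [abs_le] at h1
        refine ⟨by linarith [h1.1], ?_⟩
        by_contra h2
        push_neg at h2
        set y := min b ((c + (x - 1)) / 2) with hy
        have hy1 : c < y := lt_min hcb (by linarith)
        have hy2 : y ≤ b := min_le_left _ _
        have hxy : 1 < x - y := by
          have : y ≤ (c + (x - 1)) / 2 := min_le_right _ _
          linarith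
        have habs : 1 < |x - y| := lt_of_lt_of_le hxy (le_abs_self _)
        have := hx y ⟨hy1, hy2⟩
        linarith
      · rintro ⟨h1, h2⟩ y ⟨hy1, hy2⟩
        rw [abs_le]
        constructor <;> linarith
    rwa [heq] at h
  -- key step: cut off an interval
  have L2 : ∀ a b u : ℝ, a ≤ b - 1 → Set.Icc (b - 1) u ∈ A → Set.Icc a b ∈ A →
      Set.Ioc b u ∈ A := by
    intro a b u hab h1 h2
    have h3 := hinter _ h1 _ (hcompl _ h2)
    have heq : Set.Icc (b - 1) u ∩ (Set.Icc a b)ᶜ = Set.Ioc b u := by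
      ext x
      simp only [Set.mem_inter_iff, Set.mem_Icc, Set.mem_compl_iff, Set.mem_Ioc, not_and, not_le]
      constructor
      · rintro ⟨⟨hx1, hx2⟩, hx3⟩
        exact ⟨hx3 (by linarith), hx2⟩
      · rintro ⟨hx1, hx2⟩
        exact ⟨⟨by linarith, hx2⟩, fun _ => hx1⟩
    rwa [heq] at h3
  have key : ∀ n : ℕ, 1 ≤ n →
      Set.Icc (0 : ℝ) (d + n) ∈ A ∧ Set.Ioc (n : ℝ) (d + n) ∈ A := by
    intro n hn
    induction n, hn using Nat.le_induction with
    | base =>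
      have h01 : Set.Icc (0 : ℝ) (d + 1) ∈ A := by
        have hu := hunion _ h0 _ hd
        have heq : Set.Icc (0 : ℝ) 1 ∪ Set.Icc d (d + 1) = Set.Icc 0 (d + 1) := by
          ext x
          simp only [Set.mem_union, Set.mem_Icc]
          constructor
          · rintro (⟨h1, h2⟩ | ⟨h1, h2⟩) <;> constructor <;> linarith
          · rintro ⟨h1, h2⟩
            rcases le_or_gt x 1 with h | h
            · exact Or.inl ⟨h1, h⟩
            · exact Or.inr ⟨by linarith, h2⟩
        rwa [heq] at hu
      have hIcc : Set.Icc (0 : ℝ) (d + (1 : ℕ)) ∈ A := by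
        rw [show ((1 : ℕ) : ℝ) = 1 by norm_num]; exact h01
      refine ⟨hIcc, ?_⟩
      have := L2 0 1 (d + 1) (by norm_num) (by rw [show (1 : ℝ) - 1 = 0 by ring]; exact h01) h0
      rw [show ((1 : ℕ) : ℝ) = 1 by norm_num]
      exact this
    | succ n hn ih =>
      obtain ⟨H1, H2⟩ := ih
      have hn1 : (1 : ℝ) ≤ n := by exact_mod_cast hn
      have A1 : Set.Icc (d + n - 1) ((n : ℝ) + 1) ∈ A :=
        d2 n (d + n) (by linarith) (by linarith) H2
      have A2 : Set.Ioc (d + (n : ℝ)) ((n : ℝ) + 1) ∈ A :=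
        L2 0 (d + n) ((n : ℝ) + 1) (by linarith) A1 H1
      have A3 : Set.Icc (0 : ℝ) ((n : ℝ) + 1) ∈ A := by
        have hu := hunion _ H1 _ A2
        rwa [Set.Icc_union_Ioc_eq_Icc (by linarith) (by linarith)] at hu
      have A4 : Set.Icc ((n : ℝ) + 1 - 1) (d + (n : ℝ) + 1) ∈ A :=
        d2 (d + n) ((n : ℝ) + 1) (by linarith) (by linarith) A2
      have A5 : Set.Ioc ((n : ℝ) + 1) (d + (n : ℝ) + 1) ∈ A :=
        L2 0 ((n : ℝ) + 1) (d + (n : ℝ) + 1) (by linarith) A4 A3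
      have A6 : Set.Icc (0 : ℝ) (d + (n : ℝ) + 1) ∈ A := by
        have hu := hunion _ A3 _ A5
        rwa [Set.Icc_union_Ioc_eq_Icc (by linarith) (by linarith)] at hu
      constructor
      · convert A6 using 2
        push_cast; ring
      · convert A5 using 2 <;> push_cast <;> ring
  refine ⟨?_, key⟩
  apply Set.infinite_of_injective_forall_mem
    (f := fun n : ℕ => Set.Ioc (((n + 1 : ℕ)) : ℝ) (d + ((n + 1 : ℕ) : ℝ)))
  · intro m n h
    simp only at h
    have hmm : (d + ((m + 1 : ℕ) : ℝ)) ∈ Set.Ioc (((m + 1 : ℕ)) : ℝ) (d + ((m + 1 : ℕ) : ℝ)) :=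
      ⟨by linarith, le_rfl⟩
    have hnn : (d + ((n + 1 : ℕ) : ℝ)) ∈ Set.Ioc (((n + 1 : ℕ)) : ℝ) (d + ((n + 1 : ℕ) : ℝ)) :=
      ⟨by linarith, le_rfl⟩
    rw [h] at hmm
    rw [← h] at hnn
    have h1 : (d + ((m + 1 : ℕ) : ℝ)) ≤ d + ((n + 1 : ℕ) : ℝ) := hmm.2
    have h2 : (d + ((n + 1 : ℕ) : ℝ)) ≤ d + ((m + 1 : ℕ) : ℝ) := hnn.2
    have : ((m + 1 : ℕ) : ℝ) = ((n + 1 : ℕ) : ℝ) := by linarith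
    exact_mod_cast Nat.succ_injective (by exact_mod_cast this)
  · intro n
    exact (key (n + 1) (by omega)).2
end
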